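/- arXiv:2509.25809 — 2 statements merged into one kernel-verified Lean document; each statement's English description precedes it below -/
import Mathlib

section
/- Let G be a graph that is both 5-connected and a contraction critical quasi 5-connected graph (i.e., no edge of G is quasi 5-contractible). Let A be a nontrivial fragment of G (so A is the union of vertex sets of some but not all components of G − T for some 4-cut or smallest cut T = N_G(A), with |A| ≥ 2 and |V(G) − A − N_G(A)| ≥ 2). If there exists a vertex x ∈ N_G(A) with |N_G(x) ∩ A| = 1, then |A| = 2. -/
open SimpleGraph Set

variable {V : Type*}

/-- `G` is `k`-connected: more than `k` vertices and removing fewer than `k`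
vertices leaves a connected graph. -/
def IsKConnected (k : ℕ) [Fintype V] (G : SimpleGraph V) : Prop :=
  k + 1 ≤ Fintype.card V ∧
    ∀ S : Set V, S.ncard < k → (G.induce Sᶜ).Connected

/-- Contraction of the edge `xy`: identify `y` with `x`, simplifying multiple edges. -/
def contractE [DecidableEq V] (G : SimpleGraph V) (x y : V) :
    SimpleGraph {v : V // v ≠ y} :=
  SimpleGraph.fromRel (fun a b =>
    G.Adj a.1 b.1 ∨ (a.1 = x ∧ G.Adj y b.1) ∨ (b.1 = x ∧ G.Adj y a.1))

/-- The (outer) neighborhood of a vertex set `A`. -/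
def gBoundary (G : SimpleGraph V) (A : Set V) : Set V :=
  {v | v ∉ A ∧ ∃ a ∈ A, G.Adj v a}

/-- `S` separates `G`: the rest of the graph splits into two nonempty parts
with no edges between them. -/
def Separates (G : SimpleGraph V) (S : Set V) : Prop :=
  ∃ A B : Set V, A.Nonempty ∧ B.Nonempty ∧ Disjoint A B ∧ A ∪ B = Sᶜ ∧
    ∀ a ∈ A, ∀ b ∈ B, ¬ G.Adj a b

/-- `T` is a nontrivial 4-cut: `|T| = 4` and `G - T` splits into two parts,
each of size at least 2, with no edges between them. -/
def IsNontrivialFourCut (G : SimpleGraph V) (T : Set V) : Prop :=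
  T.ncard = 4 ∧ ∃ A B : Set V, 2 ≤ A.ncard ∧ 2 ≤ B.ncard ∧ Disjoint A B ∧
    A ∪ B = Tᶜ ∧ ∀ a ∈ A, ∀ b ∈ B, ¬ G.Adj a b

/-- `G` is quasi 5-connected: 4-connected without a nontrivial 4-cut. -/
def QuasiFiveConnected [Fintype V] (G : SimpleGraph V) : Prop :=
  IsKConnected 4 G ∧ ∀ T : Set V, ¬ IsNontrivialFourCut G T

/-- `G` is contraction critical quasi 5-connected. -/
def ContractionCriticalQuasiFive [Fintype V] [DecidableEq V] (G : SimpleGraph V) : Prop :=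
  QuasiFiveConnected G ∧
    ∀ x y : V, G.Adj x y → ¬ QuasiFiveConnected (contractE G x y)

/-- `A` is a fragment of `G`: both `A` and its "far side" are nonempty and the
neighborhood of `A` is a smallest separating set. -/
def IsFragment (G : SimpleGraph V) (A : Set V) : Prop :=
  A.Nonempty ∧ (Aᶜ \ gBoundary G A).Nonempty ∧
    ∀ S : Set V, Separates G S → (gBoundary G A).ncard ≤ S.ncard

/-- A nontrivial fragment: both sides have at least two vertices. -/
def IsNontrivialFragment (G : SimpleGraph V) (A : Set V) : Prop :=
  IsFragment G A ∧ 2 ≤ A.ncard ∧ 2 ≤ (Aᶜ \ gBoundary G A).ncard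

/-- Degree sum at least 9 for every pair of vertices at distance one or two. -/
def DegSumNine (G : SimpleGraph V) : Prop :=
  ∀ u v : V, (G.dist u v = 1 ∨ G.dist u v = 2) →
    9 ≤ (G.neighborSet u).ncard + (G.neighborSet v).ncard


/-!
Let `a` be the unique neighbour of `x` in `A`. Contracting `xa` keeps 4-connectivity, so by
criticality the contraction has a nontrivial 4-cut; by 5-connectivity of `G` it contains the
contracted vertex, hence pulls back to a separation `(B, S, C)` of `G` with `|S| ≤ 5` and
`x, a ∈ S`. Cross it with the separation `(A, N(A), A')`: every nonempty corner has a
neighbourhood of size at least 5, inside the adjacent cells of the two separators, and the corners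
of `A` beat this by one because `x`, whose only neighbour in `A` is `a ∈ S`, has no neighbour in
them. Counting the nine cells then leaves only `A ⊆ S` with `|A| ≤ 2`.
-/

def IsSeparation (G : SimpleGraph V) (A S B : Set V) : Prop :=
  Disjoint A B ∧ A ∪ B = Sᶜ ∧ ∀ a ∈ A, ∀ b ∈ B, ¬ G.Adj a b

namespace IsSeparation

variable {G : SimpleGraph V} {A S B : Set V}

lemma symm (h : IsSeparation G A S B) : IsSeparation G B S A :=
  ⟨h.1.symm, by rw [union_comm, h.2.1], fun b hb a ha hba => h.2.2 a ha b hb hba.symm⟩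

lemma not_adj (h : IsSeparation G A S B) {u v : V} (hu : u ∈ A) (hv : v ∈ B) :
    ¬ G.Adj u v :=
  h.2.2 u hu v hv

lemma notMem_right (h : IsSeparation G A S B) {v : V} (hv : v ∈ A) : v ∉ B :=
  Set.disjoint_left.mp h.1 hv

lemma notMem_sep (h : IsSeparation G A S B) {v : V} (hv : v ∈ A) : v ∉ S := by
  have : v ∈ Sᶜ := h.2.1 ▸ Or.inl hv
  exact this

lemma mem_or_mem_or_mem (h : IsSeparation G A S B) (v : V) : v ∈ A ∨ v ∈ S ∨ v ∈ B := by
  by_cases hv : v ∈ S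
  · exact Or.inr (Or.inl hv)
  · have : v ∈ A ∪ B := h.2.1 ▸ hv
    exact this.elim Or.inl (Or.inr ∘ Or.inr)

lemma separates (h : IsSeparation G A S B) (hA : A.Nonempty) (hB : B.Nonempty) :
    Separates G S :=
  ⟨A, B, hA, hB, h⟩

lemma ncard_eq_inter_right [Finite V] (h : IsSeparation G A S B) (X : Set V) :
    X.ncard = (X ∩ A).ncard + (X ∩ S).ncard + (X ∩ B).ncard := by
  have hdiff : X \ S = (X ∩ A) ∪ (X ∩ B) := by
    rw [← inter_union_distrib_left, h.2.1, sdiff_eq]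
  have hdisj : Disjoint (X ∩ A) (X ∩ B) :=
    h.1.mono inter_subset_right inter_subset_right
  rw [← ncard_inter_add_ncard_sdiff_eq_ncard X S, hdiff, ncard_union_eq hdisj]
  omega

lemma ncard_eq_inter_left [Finite V] (h : IsSeparation G A S B) (X : Set V) :
    X.ncard = (A ∩ X).ncard + (S ∩ X).ncard + (B ∩ X).ncard := by
  rw [inter_comm A, inter_comm S, inter_comm B]
  exact h.ncard_eq_inter_right X

end IsSeparation

lemma isSeparation_gBoundary (G : SimpleGraph V) (A : Set V) :
    IsSeparation G A (gBoundary G A) (Aᶜ \ gBoundary G A) := by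
  refine ⟨disjoint_left.mpr fun v hv h => h.1 hv, ?_,
    fun v hv w hw hvw => hw.2 ⟨hw.1, v, hv, hvw.symm⟩⟩
  ext v
  by_cases hA : v ∈ A
  · simp [hA, gBoundary]
  · by_cases hT : v ∈ gBoundary G A <;> simp [hA, hT]

lemma IsKConnected.le_ncard_of_separates [Fintype V] {k : ℕ} {G : SimpleGraph V}
    (hk : IsKConnected k G) {S : Set V} (hS : Separates G S) : k ≤ S.ncard := by
  by_contra! hlt
  obtain ⟨A, B, ⟨a, ha⟩, ⟨b, hb⟩, hsep⟩ := hS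
  replace hsep : IsSeparation G A S B := hsep
  obtain ⟨p⟩ :=
    (hk.2 S hlt).preconnected ⟨a, hsep.notMem_sep ha⟩ ⟨b, hsep.symm.notMem_sep hb⟩
  obtain ⟨d, -, hdA, hdB⟩ :=
    p.exists_boundary_dart {v | v.1 ∈ A} ha (hsep.symm.notMem_right hb)
  have hdB' : d.snd.1 ∈ B := by
    rcases hsep.mem_or_mem_or_mem d.snd.1 with h | h | h
    · exact absurd h hdB
    · exact absurd h d.snd.2
    · exact h
  exact hsep.not_adj hdA hdB' d.adj

section Crossing

variable {G : SimpleGraph V} {A T A' B S C : Set V}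

lemma gBoundary_inter_subset (hP : IsSeparation G A T A') (hQ : IsSeparation G B S C) :
    gBoundary G (A ∩ B) ⊆ (A ∩ S) ∪ (T ∩ S) ∪ (T ∩ B) := by
  rintro v ⟨hv, w, hw, hvw⟩
  have hP' : v ∈ A ∨ v ∈ T := by
    rcases hP.mem_or_mem_or_mem v with h | h | h
    · exact Or.inl h
    · exact Or.inr h
    · exact absurd hvw.symm (hP.not_adj hw.1 h)
  have hQ' : v ∈ B ∨ v ∈ S := by
    rcases hQ.mem_or_mem_or_mem v with h | h | h
    · exact Or.inl h
    · exact Or.inr h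
    · exact absurd hvw.symm (hQ.not_adj hw.2 h)
  simp only [mem_union, mem_inter_iff] at hv ⊢
  tauto

lemma IsKConnected.le_ncard_of_gBoundary_inter_subset [Fintype V] {k : ℕ}
    (hk : IsKConnected k G) (hP : IsSeparation G A T A') (hQ : IsSeparation G B S C)
    (hAB : (A ∩ B).Nonempty) (hout : (A' ∪ C).Nonempty) {R : Set V}
    (hR : gBoundary G (A ∩ B) ⊆ R) : k ≤ R.ncard := by
  obtain ⟨v, hv⟩ := hout
  have hfar : v ∉ A ∩ B ∧ v ∉ (A ∩ S) ∪ (T ∩ S) ∪ (T ∩ B) := by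
    simp only [mem_union, mem_inter_iff]
    rcases hv with hv | hv
    · have := hP.symm.notMem_right hv
      have := hP.symm.notMem_sep hv
      tauto
    · have := hQ.symm.notMem_right hv
      have := hQ.symm.notMem_sep hv
      tauto
  have hsep := (isSeparation_gBoundary G (A ∩ B)).separates hAB
    ⟨v, hfar.1, fun hb => hfar.2 (gBoundary_inter_subset hP hQ hb)⟩
  exact (hk.le_ncard_of_separates hsep).trans (ncard_le_ncard hR)

lemma IsKConnected.le_ncard_corner [Fintype V] {k : ℕ}
    (hk : IsKConnected k G) (hP : IsSeparation G A T A') (hQ : IsSeparation G B S C)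
    (hAB : (A ∩ B).Nonempty) (hout : (A' ∪ C).Nonempty) :
    k ≤ (A ∩ S).ncard + (T ∩ S).ncard + (T ∩ B).ncard :=
  calc k ≤ ((A ∩ S) ∪ (T ∩ S) ∪ (T ∩ B)).ncard :=
        hk.le_ncard_of_gBoundary_inter_subset hP hQ hAB hout (gBoundary_inter_subset hP hQ)
    _ ≤ ((A ∩ S) ∪ (T ∩ S)).ncard + (T ∩ B).ncard := ncard_union_le _ _
    _ ≤ _ := Nat.add_le_add_right (ncard_union_le _ _) _

lemma IsKConnected.lt_ncard_corner [Fintype V] {k : ℕ}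
    (hk : IsKConnected k G) (hP : IsSeparation G A T A') (hQ : IsSeparation G B S C)
    (hAB : (A ∩ B).Nonempty) (hout : (A' ∪ C).Nonempty) {x : V} (hxT : x ∈ T) (hxS : x ∈ S)
    (hxAB : ∀ w ∈ A ∩ B, ¬ G.Adj x w) :
    k < (A ∩ S).ncard + (T ∩ S).ncard + (T ∩ B).ncard := by
  have hxR : x ∈ (A ∩ S) ∪ (T ∩ S) ∪ (T ∩ B) := Or.inl (Or.inr ⟨hxT, hxS⟩)
  have hR : gBoundary G (A ∩ B) ⊆ ((A ∩ S) ∪ (T ∩ S) ∪ (T ∩ B)) \ {x} := by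
    rintro v hv
    refine ⟨gBoundary_inter_subset hP hQ hv, ?_⟩
    rintro rfl
    obtain ⟨-, w, hw, hvw⟩ := hv
    exact hxAB w hw hvw
  have hle := hk.le_ncard_of_gBoundary_inter_subset hP hQ hAB hout hR
  rw [ncard_sdiff_singleton_of_mem hxR] at hle
  have := ncard_union_le ((A ∩ S) ∪ (T ∩ S)) (T ∩ B)
  have := ncard_union_le (A ∩ S) (T ∩ S)
  have : 0 < ((A ∩ S) ∪ (T ∩ S) ∪ (T ∩ B)).ncard := (ncard_pos).mpr ⟨x, hxR⟩
  omega

lemma ncard_le_two_of_crossing [Fintype V] (h5 : IsKConnected 5 G)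
    (hP : IsSeparation G A T A') (hQ : IsSeparation G B S C)
    (hT : T.ncard ≤ 5) (hS : S.ncard ≤ 5)
    (hA' : 2 ≤ A'.ncard) (hB : 2 ≤ B.ncard) (hC : 2 ≤ C.ncard)
    {x a : V} (hxT : x ∈ T) (hxS : x ∈ S) (haA : a ∈ A) (haS : a ∈ S)
    (hxa : ∀ w ∈ A, G.Adj x w → w = a) :
    A.ncard ≤ 2 := by
  have hB0 : B.Nonempty := nonempty_of_ncard_ne_zero (by omega)
  have hC0 : C.Nonempty := nonempty_of_ncard_ne_zero (by omega)
  have hxB : ∀ w ∈ A ∩ B, ¬ G.Adj x w := fun w hw hxw =>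
    hQ.notMem_sep hw.2 (hxa w hw.1 hxw ▸ haS)
  have hxC : ∀ w ∈ A ∩ C, ¬ G.Adj x w := fun w hw hxw =>
    hQ.symm.notMem_sep hw.2 (hxa w hw.1 hxw ▸ haS)
  have hAB : 0 < (A ∩ B).ncard → 6 ≤ (A ∩ S).ncard + (T ∩ S).ncard + (T ∩ B).ncard :=
    fun h => h5.lt_ncard_corner hP hQ ((ncard_pos).mp h) (hC0.mono subset_union_right)
      hxT hxS hxB
  have hAC : 0 < (A ∩ C).ncard → 6 ≤ (A ∩ S).ncard + (T ∩ S).ncard + (T ∩ C).ncard :=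
    fun h => h5.lt_ncard_corner hP hQ.symm ((ncard_pos).mp h) (hB0.mono subset_union_right)
      hxT hxS hxC
  have hA'B : 0 < (A' ∩ B).ncard → 5 ≤ (A' ∩ S).ncard + (T ∩ S).ncard + (T ∩ B).ncard :=
    fun h => h5.le_ncard_corner hP.symm hQ ((ncard_pos).mp h) ⟨a, Or.inl haA⟩
  have hA'C : 0 < (A' ∩ C).ncard → 5 ≤ (A' ∩ S).ncard + (T ∩ S).ncard + (T ∩ C).ncard :=
    fun h => h5.le_ncard_corner hP.symm hQ.symm ((ncard_pos).mp h) ⟨a, Or.inl haA⟩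
  have haS' : 0 < (A ∩ S).ncard := (ncard_pos).mpr ⟨a, haA, haS⟩
  have hxS' : 0 < (T ∩ S).ncard := (ncard_pos).mpr ⟨x, hxT, hxS⟩
  -- Two opposite corners cannot both be nonempty (their inequalities add up to more than
  -- `|S| + |T| ≤ 10`); the remaining cases force `A = A ∩ S` with at most two vertices.
  have := hQ.ncard_eq_inter_right A
  have := hQ.ncard_eq_inter_right A'
  have := hQ.ncard_eq_inter_right T
  have := hP.ncard_eq_inter_left B
  have := hP.ncard_eq_inter_left S
  have := hP.ncard_eq_inter_left C
  omega

end Crossing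

section Contraction

variable [DecidableEq V] {G : SimpleGraph V} {x y : V}

lemma contractE_adj_of_adj {v w : {u : V // u ≠ y}} (h : G.Adj v.1 w.1) :
    (contractE G x y).Adj v w := by
  rw [contractE, fromRel_adj]
  exact ⟨fun hvw => G.ne_of_adj h (congrArg Subtype.val hvw), Or.inl (Or.inl h)⟩

lemma isKConnected_contractE [Fintype V] {k : ℕ} (hk : IsKConnected (k + 1) G) :
    IsKConnected k (contractE G x y) := by
  refine ⟨?_, fun S hS => ?_⟩
  · have := hk.1
    simp only [ne_eq, Fintype.card_subtype_compl, Fintype.card_unique]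
    omega
  have hL := ncard_insert_le y (Subtype.val '' S)
  rw [ncard_image_of_injective _ Subtype.val_injective] at hL
  set L : Set V := insert y (Subtype.val '' S)
  have hne : ∀ v : ↥Lᶜ, v.1 ≠ y := fun v h => v.2 (h ▸ mem_insert _ _)
  let f : G.induce Lᶜ →g (contractE G x y).induce Sᶜ :=
    { toFun := fun v => ⟨⟨v.1, hne v⟩, fun h => v.2 (mem_insert_of_mem _ ⟨_, h, rfl⟩)⟩
      map_rel' := fun h => contractE_adj_of_adj h }
  refine (hk.2 L (by omega)).map f fun w => ⟨⟨w.1.1, ?_⟩, rfl⟩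
  rintro (h | ⟨s, hs, hsw⟩)
  · exact w.1.2 h
  · exact w.2 (Subtype.ext hsw ▸ hs)

def contractEMap (hxy : x ≠ y) (v : V) : {u : V // u ≠ y} :=
  if h : v = y then ⟨x, hxy⟩ else ⟨v, h⟩

section Map

variable (hxy : x ≠ y)

lemma contractEMap_self : contractEMap hxy y = ⟨x, hxy⟩ := dif_pos rfl

lemma contractEMap_of_ne {v : V} (hv : v ≠ y) : contractEMap hxy v = ⟨v, hv⟩ := dif_neg hv

lemma contractEMap_surjective : Function.Surjective (contractEMap hxy) :=
  fun w => ⟨w.1, contractEMap_of_ne hxy w.2⟩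

lemma ncard_le_ncard_preimage_contractEMap [Finite V] (T : Set {u : V // u ≠ y}) :
    T.ncard ≤ (contractEMap hxy ⁻¹' T).ncard := by
  have := ncard_image_le (f := contractEMap hxy) (s := contractEMap hxy ⁻¹' T)
  rwa [image_preimage_eq T (contractEMap_surjective hxy)] at this

lemma contractEMap_eq_or_adj {u v : V} (h : G.Adj u v) :
    contractEMap hxy u = contractEMap hxy v ∨
      (contractE G x y).Adj (contractEMap hxy u) (contractEMap hxy v) := by
  have hy : ∀ {v : V}, G.Adj y v → contractEMap hxy y = contractEMap hxy v ∨
      (contractE G x y).Adj (contractEMap hxy y) (contractEMap hxy v) := by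
    intro v h
    have hv : v ≠ y := G.ne_of_adj h.symm
    rw [contractEMap_self, contractEMap_of_ne hxy hv]
    by_cases hxv : x = v
    · exact Or.inl (Subtype.ext hxv)
    · rw [contractE, fromRel_adj]
      exact Or.inr
        ⟨fun e => hxv (congrArg Subtype.val e), Or.inl (Or.inr (Or.inl ⟨rfl, h⟩))⟩
  by_cases hu : u = y
  · subst hu; exact hy h
  by_cases hv : v = y
  · subst hv; exact (hy h.symm).imp Eq.symm Adj.symm
  rw [contractEMap_of_ne hxy hu, contractEMap_of_ne hxy hv]
  exact Or.inr (contractE_adj_of_adj h)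

lemma preimage_contractEMap_subset (T : Set {u : V // u ≠ y}) :
    contractEMap hxy ⁻¹' T ⊆ insert y (Subtype.val '' T) := by
  intro v hv
  by_cases h : v = y
  · exact Or.inl h
  · exact Or.inr ⟨⟨v, h⟩, by rwa [mem_preimage, contractEMap_of_ne hxy h] at hv, rfl⟩

lemma IsSeparation.comap_contractEMap {P T Q : Set {u : V // u ≠ y}}
    (h : IsSeparation (contractE G x y) P T Q) :
    IsSeparation G (contractEMap hxy ⁻¹' P) (contractEMap hxy ⁻¹' T)
      (contractEMap hxy ⁻¹' Q) :=
  ⟨h.1.preimage _, by rw [← preimage_union, h.2.1, preimage_compl],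
    fun u hu v hv huv => (contractEMap_eq_or_adj hxy huv).elim
      (fun e => h.notMem_right hu (e ▸ hv)) (h.not_adj hu hv)⟩

lemma ncard_preimage_contractEMap_le [Finite V] (T : Set {u : V // u ≠ y}) :
    (contractEMap hxy ⁻¹' T).ncard ≤ T.ncard + 1 := by
  have := (ncard_le_ncard (preimage_contractEMap_subset hxy T)).trans (ncard_insert_le _ _)
  rwa [ncard_image_of_injective _ Subtype.val_injective] at this

lemma ncard_preimage_contractEMap_le_of_notMem [Finite V] {T : Set {u : V // u ≠ y}}
    (hT : ⟨x, hxy⟩ ∉ T) : (contractEMap hxy ⁻¹' T).ncard ≤ T.ncard := by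
  have hsub : contractEMap hxy ⁻¹' T ⊆ Subtype.val '' T := by
    rw [← subset_insert_iff_of_notMem (a := y) (by simpa [contractEMap_self] using hT)]
    exact preimage_contractEMap_subset hxy T
  simpa only [ncard_image_of_injective _ Subtype.val_injective] using ncard_le_ncard hsub

end Map

lemma exists_isSeparation_of_isNontrivialFourCut_contractE [Fintype V]
    (h5 : IsKConnected 5 G) (hxy : x ≠ y) {T : Set {u : V // u ≠ y}}
    (hT : IsNontrivialFourCut (contractE G x y) T) :
    ∃ B S C : Set V, IsSeparation G B S C ∧ S.ncard ≤ 5 ∧ 2 ≤ B.ncard ∧ 2 ≤ C.ncard ∧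
      x ∈ S ∧ y ∈ S := by
  obtain ⟨hT4, P, Q, hP, hQ, hsep⟩ := hT
  replace hsep : IsSeparation (contractE G x y) P T Q := hsep
  have hlift := hsep.comap_contractEMap hxy
  have hxT : ⟨x, hxy⟩ ∈ T := by
    by_contra hxT
    have hsurj := contractEMap_surjective hxy
    have := h5.le_ncard_of_separates (hlift.separates
      ((nonempty_of_ncard_ne_zero (by omega)).preimage hsurj)
      ((nonempty_of_ncard_ne_zero (by omega)).preimage hsurj))
    have := ncard_preimage_contractEMap_le_of_notMem hxy hxT
    omega
  refine ⟨_, _, _, hlift, ?_, hP.trans (ncard_le_ncard_preimage_contractEMap hxy P),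
    hQ.trans (ncard_le_ncard_preimage_contractEMap hxy Q), ?_, ?_⟩
  · have := ncard_preimage_contractEMap_le hxy T
    omega
  · rwa [mem_preimage, contractEMap_of_ne hxy hxy]
  · rwa [mem_preimage, contractEMap_self]

end Contraction

/-- In a 5-connected, contraction critical quasi 5-connected graph,
a nontrivial fragment having a vertex of its neighborhood with exactly one
neighbor inside it has exactly two vertices. -/
theorem stmt2 {V : Type*} [Fintype V] [DecidableEq V] (G : SimpleGraph V)
    (h5 : IsKConnected 5 G) (hcc : ContractionCriticalQuasiFive G)
    (A : Set V) (hA : IsNontrivialFragment G A)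
    (x : V) (hx : x ∈ gBoundary G A) (h1 : (G.neighborSet x ∩ A).ncard = 1) :
    A.ncard = 2 := by
  obtain ⟨⟨-, -, hmin⟩, hA2, hA'2⟩ := hA
  obtain ⟨a, ha⟩ := ncard_eq_one.mp h1
  have hxa : ∀ w ∈ A, G.Adj x w → w = a := fun w hw hxw =>
    (ha ▸ ⟨hxw, hw⟩ : w ∈ ({a} : Set V))
  obtain ⟨hadj, haA⟩ : G.Adj x a ∧ a ∈ A := (ha ▸ rfl : a ∈ G.neighborSet x ∩ A)
  obtain ⟨T, hT⟩ : ∃ T, IsNontrivialFourCut (contractE G x a) T := by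
    by_contra! hT
    exact hcc.2 x a hadj ⟨isKConnected_contractE h5, hT⟩
  obtain ⟨B, S, C, hQ, hS, hB, hC, hxS, haS⟩ :=
    exists_isSeparation_of_isNontrivialFourCut_contractE h5 (G.ne_of_adj hadj) hT
  have hboundary : (gBoundary G A).ncard ≤ 5 :=
    (hmin S (hQ.separates (nonempty_of_ncard_ne_zero (by omega))
      (nonempty_of_ncard_ne_zero (by omega)))).trans hS
  have := ncard_le_two_of_crossing h5 (isSeparation_gBoundary G A) hQ hboundary hS hA'2 hB hC
    hx hxS haA haS hxa
  omega
end

section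
/- Let G be a quasi 5-connected graph on at least 8 vertices. Suppose there is a vertex x of degree 4 with N_G(x) = {x₁, x₂, x₃, x₄} such that {x₁, x₂, x₃} induces a triangle in G. Then the edge x x₄ is quasi 5-contractible. -/
open SimpleGraph Set

variable {V : Type*}

/-!
Let `π : V → V - x₄` be the quotient map of the contraction, sending `x₄` to `x`. Preimages under
`π` turn a separation `(S', A', B')` of `G/xx₄` into a separation of `G` with sides at least as
large. Its separator is one vertex too big exactly when the merged vertex lies in `S'`, since then
it contains both `x` and `x₄`. The neighbours of `x` other than `x₄` form a triangle, so they cannot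
meet both sides; hence `x` can be moved from the separator into the side it does not see. So every
separation of `G/xx₄` yields one of `G` with the same separator size and sides no smaller, and a
small cut or a nontrivial 4-cut of `G/xx₄` would give one of `G`.
-/

theorem Set.ncard_le_ncard_preimage {V W : Type*} [Finite V] {f : V → W}
    (hf : Function.Surjective f) (s : Set W) : s.ncard ≤ (f ⁻¹' s).ncard := by
  conv_lhs => rw [← image_preimage_eq s hf]
  exact ncard_image_le

namespace SimpleGraph

variable {V W : Type*}

structure IsSeparation (G : SimpleGraph V) (S A B : Set V) : Prop where
  disjoint : Disjoint A B
  union_eq : A ∪ B = Sᶜ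
  not_adj : ∀ a ∈ A, ∀ b ∈ B, ¬ G.Adj a b

namespace IsSeparation

variable {G : SimpleGraph V} {S A B : Set V}

theorem symm (h : IsSeparation G S A B) : IsSeparation G S B A :=
  ⟨h.disjoint.symm, by rw [union_comm, h.union_eq],
    fun b hb a ha hab => h.not_adj a ha b hb hab.symm⟩

theorem notMem_of_mem_left {a : V} (h : IsSeparation G S A B) (ha : a ∈ A) : a ∉ S := by
  have : a ∈ A ∪ B := Or.inl ha
  rwa [h.union_eq] at this

theorem mem_left_of_reachable (h : IsSeparation G S A B) {u v : ↥Sᶜ}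
    (huv : (G.induce Sᶜ).Reachable u v) (hu : u.1 ∈ A) : v.1 ∈ A := by
  obtain ⟨p⟩ := huv
  induction p with
  | nil => exact hu
  | @cons u w v huw _ ih =>
    have hw : w.1 ∈ A ∪ B := by rw [h.union_eq]; exact w.2
    exact ih (hw.resolve_right fun hwB => h.not_adj u.1 hu w.1 hwB huw)

theorem insert_left {x : V} (h : IsSeparation G S A B) (hxS : x ∈ S)
    (hx : ∀ b ∈ B, ¬ G.Adj x b) : IsSeparation G (S \ {x}) (insert x A) B := by
  refine ⟨disjoint_insert_left.2 ⟨fun hxB => h.symm.notMem_of_mem_left hxB hxS, h.disjoint⟩,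
    ?_, ?_⟩
  · rw [insert_union, h.union_eq, compl_sdiff]
    exact insert_eq x Sᶜ
  · rintro a (rfl | ha) b hb
    exacts [hx b hb, h.not_adj a ha b hb]

theorem insert_left_or_insert_right_of_isClique {x : V} (h : IsSeparation G S A B) (hxS : x ∈ S)
    (hK : G.IsClique (G.neighborSet x \ S)) :
    IsSeparation G (S \ {x}) (insert x A) B ∨ IsSeparation G (S \ {x}) A (insert x B) := by
  by_cases hA : ∃ a ∈ A, G.Adj x a
  · obtain ⟨a, ha, hxa⟩ := hA
    refine .inl (h.insert_left hxS fun b hb hxb => h.not_adj a ha b hb ?_)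
    exact hK ⟨hxa, h.notMem_of_mem_left ha⟩ ⟨hxb, h.symm.notMem_of_mem_left hb⟩
      (h.disjoint.ne_of_mem ha hb)
  · push Not at hA
    exact .inr (h.symm.insert_left hxS hA).symm

theorem comap {H : SimpleGraph W} {f : V → W}
    (hf : ∀ u v, G.Adj u v → f u ≠ f v → H.Adj (f u) (f v)) {S A B : Set W}
    (h : H.IsSeparation S A B) : G.IsSeparation (f ⁻¹' S) (f ⁻¹' A) (f ⁻¹' B) :=
  ⟨h.disjoint.preimage f, by rw [← preimage_union, h.union_eq, preimage_compl],
    fun a ha b hb hab => h.not_adj _ ha _ hb (hf a b hab (h.disjoint.ne_of_mem ha hb))⟩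

end IsSeparation

section Contraction

variable [DecidableEq V] {x y : V}

/-- The quotient map of the contraction `contractE G x y`. -/
def contractMap (hxy : x ≠ y) (v : V) : {v : V // v ≠ y} :=
  if h : v = y then ⟨x, hxy⟩ else ⟨v, h⟩

section

variable (hxy : x ≠ y)

theorem contractMap_of_ne {v : V} (hv : v ≠ y) : contractMap hxy v = ⟨v, hv⟩ :=
  dif_neg hv

theorem contractMap_right : contractMap hxy y = contractMap hxy x := by
  rw [contractMap_of_ne hxy hxy, contractMap, dif_pos rfl]

theorem contractMap_surjective : Function.Surjective (contractMap hxy) :=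
  fun w => ⟨w.1, contractMap_of_ne hxy w.2⟩

theorem injOn_contractMap {s : Set V} (hs : x ∉ s ∨ y ∉ s) : InjOn (contractMap hxy) s := by
  intro u hu v hv huv
  by_cases hu' : u = y <;> by_cases hv' : v = y
  · exact hu'.trans hv'.symm
  · subst hu'
    rw [contractMap_right, contractMap_of_ne hxy hxy, contractMap_of_ne hxy hv'] at huv
    obtain rfl : x = v := congrArg Subtype.val huv
    exact (hs.elim (· hv) (· hu)).elim
  · subst hv'
    rw [contractMap_right, contractMap_of_ne hxy hxy, contractMap_of_ne hxy hu'] at huv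
    obtain rfl : u = x := congrArg Subtype.val huv
    exact (hs.elim (· hu) (· hv)).elim
  · simpa [contractMap_of_ne hxy hu', contractMap_of_ne hxy hv'] using huv

theorem contractE_adj_contractMap {G : SimpleGraph V} {u v : V} (huv : G.Adj u v)
    (hne : contractMap hxy u ≠ contractMap hxy v) :
    (contractE G x y).Adj (contractMap hxy u) (contractMap hxy v) := by
  refine (fromRel_adj _ _ _).2 ⟨hne, .inl ?_⟩
  by_cases hu : u = y
  · subst hu
    have hv : v ≠ u := huv.ne'
    rw [contractMap_right, contractMap_of_ne hxy hxy, contractMap_of_ne hxy hv]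
    exact .inr (.inl ⟨rfl, huv⟩)
  by_cases hv : v = y
  · subst hv
    rw [contractMap_right, contractMap_of_ne hxy hxy, contractMap_of_ne hxy hu]
    exact .inr (.inr ⟨rfl, huv.symm⟩)
  rw [contractMap_of_ne hxy hu, contractMap_of_ne hxy hv]
  exact .inl huv

end

theorem IsSeparation.exists_lift_contractE [Finite V] {G : SimpleGraph V} (hxy : x ≠ y)
    (hK : G.IsClique (G.neighborSet x \ {y})) {S' A' B' : Set {v : V // v ≠ y}}
    (h : (contractE G x y).IsSeparation S' A' B') :
    ∃ S A B, G.IsSeparation S A B ∧ S.ncard = S'.ncard ∧ A'.ncard ≤ A.ncard ∧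
      B'.ncard ≤ B.ncard := by
  set π := contractMap hxy
  have hπ := h.comap fun _ _ => contractE_adj_contractMap hxy
  have hA := ncard_le_ncard_preimage (contractMap_surjective hxy) A'
  have hB := ncard_le_ncard_preimage (contractMap_surjective hxy) B'
  by_cases hx : π x ∈ S'
  · have hyS : y ∈ π ⁻¹' S' := by simpa only [mem_preimage, π, contractMap_right] using hx
    have hK' : G.IsClique (G.neighborSet x \ π ⁻¹' S') :=
      hK.subset (sdiff_subset_sdiff_right (singleton_subset_iff.2 hyS))
    have hS : (π ⁻¹' S' \ {x}).ncard = S'.ncard := by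
      rw [← (injOn_contractMap hxy (.inl fun hx => hx.2 rfl)).ncard_image]
      congr 1
      refine (image_subset_iff.2 sdiff_subset).antisymm fun s hs => ?_
      obtain ⟨v, rfl⟩ := contractMap_surjective hxy s
      by_cases hv : v = x
      · exact ⟨y, ⟨hyS, hxy.symm⟩, hv ▸ contractMap_right hxy⟩
      · exact ⟨v, ⟨hs, hv⟩, rfl⟩
    rcases hπ.insert_left_or_insert_right_of_isClique hx hK' with h' | h'
    · exact ⟨_, _, _, h', hS, hA.trans (ncard_le_ncard (subset_insert _ _)), hB⟩
    · exact ⟨_, _, _, h', hS, hA, hB.trans (ncard_le_ncard (subset_insert _ _))⟩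
  · refine ⟨_, _, _, hπ, ?_, hA, hB⟩
    have hyS : y ∉ π ⁻¹' S' := by simpa only [mem_preimage, π, contractMap_right] using hx
    rw [← (injOn_contractMap hxy (.inr hyS)).ncard_image,
      image_preimage_eq _ (contractMap_surjective hxy)]

end Contraction

end SimpleGraph

section Connectivity

variable {V W : Type*} {G : SimpleGraph V}

theorem separates_iff_exists_isSeparation {S : Set V} :
    Separates G S ↔ ∃ A B, A.Nonempty ∧ B.Nonempty ∧ G.IsSeparation S A B := by
  constructor
  · rintro ⟨A, B, hA, hB, hd, hU, hn⟩
    exact ⟨A, B, hA, hB, hd, hU, hn⟩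
  · rintro ⟨A, B, hA, hB, hd, hU, hn⟩
    exact ⟨A, B, hA, hB, hd, hU, hn⟩

theorem isNontrivialFourCut_iff {T : Set V} :
    IsNontrivialFourCut G T ↔
      T.ncard = 4 ∧ ∃ A B, 2 ≤ A.ncard ∧ 2 ≤ B.ncard ∧ G.IsSeparation T A B := by
  constructor
  · rintro ⟨hT, A, B, hA, hB, hd, hU, hn⟩
    exact ⟨hT, A, B, hA, hB, hd, hU, hn⟩
  · rintro ⟨hT, A, B, hA, hB, hd, hU, hn⟩
    exact ⟨hT, A, B, hA, hB, hd, hU, hn⟩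

theorem separates_iff_not_connected {S : Set V} (hS : Sᶜ.Nonempty) :
    Separates G S ↔ ¬ (G.induce Sᶜ).Connected := by
  rw [separates_iff_exists_isSeparation]
  constructor
  · rintro ⟨A, B, ⟨a, ha⟩, ⟨b, hb⟩, h⟩ hc
    have hab := hc.preconnected ⟨a, h.notMem_of_mem_left ha⟩ ⟨b, h.symm.notMem_of_mem_left hb⟩
    exact Set.disjoint_left.1 h.disjoint (h.mem_left_of_reachable hab ha) hb
  · intro hc
    have : Nonempty ↥Sᶜ := hS.to_subtype
    obtain ⟨u, v, huv⟩ : ∃ u v : ↥Sᶜ, ¬ (G.induce Sᶜ).Reachable u v := by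
      by_contra! h
      exact hc ⟨h⟩
    set A : Set V := {w | ∃ hw : w ∈ Sᶜ, (G.induce Sᶜ).Reachable u ⟨w, hw⟩}
    refine ⟨A, Sᶜ \ A, ⟨u, u.2, .rfl⟩, ⟨v, v.2, fun ⟨_, hr⟩ => huv hr⟩, disjoint_sdiff_right,
      union_sdiff_cancel fun w hw => hw.1, ?_⟩
    rintro a ⟨ha, hr⟩ b hb hab
    exact hb.2 ⟨hb.1, hr.trans (Adj.reachable (show (G.induce Sᶜ).Adj ⟨a, ha⟩ ⟨b, hb.1⟩ from hab))⟩

theorem isKConnected_iff [Fintype V] {k : ℕ} :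
    IsKConnected k G ↔ k + 1 ≤ Fintype.card V ∧ ∀ S : Set V, S.ncard < k → ¬ Separates G S := by
  refine and_congr_right fun hk => forall₂_congr fun S hS => ?_
  have : S ≠ univ := by
    rintro rfl
    rw [ncard_univ, Nat.card_eq_fintype_card] at hS
    omega
  rw [separates_iff_not_connected (nonempty_compl.2 this), not_not]

theorem QuasiFiveConnected.of_forall_isSeparation [Fintype V] [Fintype W]
    {H : SimpleGraph W} (hG : QuasiFiveConnected G) (hW : 5 ≤ Fintype.card W)
    (hlift : ∀ S' A' B', H.IsSeparation S' A' B' → ∃ S A B, G.IsSeparation S A B ∧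
      S.ncard = S'.ncard ∧ A'.ncard ≤ A.ncard ∧ B'.ncard ≤ B.ncard) :
    QuasiFiveConnected H := by
  refine ⟨isKConnected_iff.2 ⟨hW, fun S' hS' hsep => ?_⟩, fun T' hT' => ?_⟩
  · obtain ⟨A', B', hA', hB', h'⟩ := separates_iff_exists_isSeparation.1 hsep
    obtain ⟨S, A, B, h, hS, hA, hB⟩ := hlift S' A' B' h'
    refine (isKConnected_iff.1 hG.1).2 S (hS ▸ hS') (separates_iff_exists_isSeparation.2
      ⟨A, B, ?_, ?_, h⟩)
    · exact nonempty_of_ncard_ne_zero (by have := (ncard_pos).2 hA'; omega)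
    · exact nonempty_of_ncard_ne_zero (by have := (ncard_pos).2 hB'; omega)
  · obtain ⟨hT', A', B', hA', hB', h'⟩ := isNontrivialFourCut_iff.1 hT'
    obtain ⟨T, A, B, h, hT, hA, hB⟩ := hlift T' A' B' h'
    exact hG.2 T (isNontrivialFourCut_iff.2 ⟨hT.trans hT', A, B, by omega, by omega, h⟩)

end Connectivity

theorem stmt4_general {V : Type*} [Fintype V] [DecidableEq V] (G : SimpleGraph V)
    (hG : QuasiFiveConnected G) (hcard : 8 ≤ Fintype.card V)
    (x x₁ x₂ x₃ x₄ : V)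
    (hN : G.neighborSet x = {x₁, x₂, x₃, x₄})
    (h12 : G.Adj x₁ x₂) (h13 : G.Adj x₁ x₃) (h23 : G.Adj x₂ x₃) :
    QuasiFiveConnected (contractE G x x₄) := by
  have hx₄ : G.Adj x x₄ := by
    rw [← mem_neighborSet, hN]
    simp
  have hK : G.IsClique (G.neighborSet x \ {x₄}) := by
    have htri : G.IsClique {x₁, x₂, x₃} := by
      simp [isClique_insert, h12, h13, h23]
    refine htri.subset ?_
    rintro v ⟨hv, hv₄⟩
    rw [hN] at hv
    simp only [mem_insert_iff, mem_singleton_iff] at hv hv₄ ⊢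
    tauto
  refine hG.of_forall_isSeparation ?_ fun _ _ _ h => h.exists_lift_contractE hx₄.ne hK
  rw [Fintype.card_subtype_compl, Fintype.card_subtype_eq]
  omega

/-- In a quasi 5-connected graph on at least 8 vertices, if a
degree-4 vertex `x` has neighbors `x₁, x₂, x₃, x₄` with `{x₁, x₂, x₃}` inducing
a triangle, then `x x₄` is quasi 5-contractible. -/
theorem stmt4 {V : Type*} [Fintype V] [DecidableEq V] (G : SimpleGraph V)
    (hG : QuasiFiveConnected G) (hcard : 8 ≤ Fintype.card V)
    (x x₁ x₂ x₃ x₄ : V)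
    (hne : [x₁, x₂, x₃, x₄].Pairwise (· ≠ ·))
    (hN : G.neighborSet x = {x₁, x₂, x₃, x₄})
    (h12 : G.Adj x₁ x₂) (h13 : G.Adj x₁ x₃) (h23 : G.Adj x₂ x₃) :
    QuasiFiveConnected (contractE G x x₄) :=
  stmt4_general G hG hcard x x₁ x₂ x₃ x₄ hN h12 h13 h23
end
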